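/- arXiv:1904.07746 — 6 statements merged into one kernel-verified Lean document; each statement's English description precedes it below -/
import Mathlib

section
/- Let (X,d) be a compact metric space and f a homeomorphism of X such that the chain recurrent set CR(f) is not all of X. Then f does not permit CR-explosions: for every open neighborhood U of CR(f) in X there exists ε > 0 such that for every homeomorphism g of X with sup_{x∈X} d(f(x),g(x)) < ε, we have CR(g) ⊆ U. -/
variable {X : Type*} [MetricSpace X]

/-- An ε-chain for `f` from `x` to `y`: a finite sequence `c 0 = x, …, c (n+1) = y`
with `dist (f (c i)) (c (i+1)) < ε` for all `i ≤ n`. -/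
def IsEpsChain (f : X → X) (ε : ℝ) (x y : X) : Prop :=
  ∃ n : ℕ, ∃ c : ℕ → X, c 0 = x ∧ c (n + 1) = y ∧ ∀ i ≤ n, dist (f (c i)) (c (i + 1)) < ε

/-- A strong ε-chain for `f` from `x` to `y`. -/
def IsStrongEpsChain (f : X → X) (ε : ℝ) (x y : X) : Prop :=
  ∃ n : ℕ, ∃ c : ℕ → X, c 0 = x ∧ c (n + 1) = y ∧
    ∑ i ∈ Finset.range (n + 1), dist (f (c i)) (c (i + 1)) < ε

/-- The chain recurrent set of `f`. -/
def CR (f : X → X) : Set X := {x | ∀ ε > (0 : ℝ), IsEpsChain f ε x x}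

/-- The strong chain recurrent set of `f`. -/
def SCR (f : X → X) : Set X := {x | ∀ ε > (0 : ℝ), IsStrongEpsChain f ε x x}

/-- `u` is a continuous Lyapunov function for `f`. -/
def IsLyapunov (f : X → X) (u : X → ℝ) : Prop :=
  Continuous u ∧ ∀ x, u (f x) ≤ u x

/-- The generalized recurrent set of `f`. -/
def GR (f : X → X) : Set X := {x | ∀ u : X → ℝ, IsLyapunov f u → u (f x) = u x}

/-- The non-wandering set of `f`. -/
def NW (f : X → X) : Set X :=
  {x | ∀ U : Set X, IsOpen U → x ∈ U → ∃ n ≥ 1, (f^[n] '' U ∩ U).Nonempty}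

/-- The omega-limit set of `x` under `f`. -/
def omegaSet (f : X → X) (x : X) : Set X :=
  {y | ∃ φ : ℕ → ℕ, StrictMono φ ∧ Filter.Tendsto (fun k => f^[φ k] x) Filter.atTop (nhds y)}

theorem no_CR_explosions [CompactSpace X] (f : X ≃ₜ X)
    (hne : CR (f : X → X) ≠ Set.univ)
    (U : Set X) (hU : IsOpen U) (hCRU : CR (f : X → X) ⊆ U) :
    ∃ ε > (0 : ℝ), ∀ g : X ≃ₜ X, (∀ x, dist (f x) (g x) < ε) →
      CR (g : X → X) ⊆ U := by
  classical
  have huc : UniformContinuous (f : X → X) :=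
    CompactSpace.uniformContinuous_of_continuous f.continuous
  set K : Set X := Uᶜ with hKdef
  have hKc : IsCompact K := hU.isClosed_compl.isCompact
  -- per-point data: for each x (relevant only in K), an ε with no ε-chain from x to x
  have hpt : ∀ x : X, ∃ ε > (0 : ℝ), x ∈ K → ¬ IsEpsChain (f : X → X) ε x x := by
    intro x
    by_cases hx : x ∈ K
    · have hxCR : x ∉ CR (f : X → X) := fun h => hx (hCRU h)
      simp only [CR, Set.mem_setOf_eq] at hxCR
      push_neg at hxCR
      obtain ⟨ε, hε, hno⟩ := hxCR
      exact ⟨ε, hε, fun _ => hno⟩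
    · exact ⟨1, one_pos, fun h => absurd h hx⟩
  choose εf hεfpos hεfchain using hpt
  -- uniform-continuity radii
  have hδ : ∀ x : X, ∃ δ > (0 : ℝ), δ ≤ εf x / 3 ∧
      ∀ a b : X, dist a b < δ → dist (f a) (f b) < εf x / 3 := by
    intro x
    have hpos : (0 : ℝ) < εf x / 3 := by have := hεfpos x; positivity
    obtain ⟨δ0, hδ0, h0⟩ := Metric.uniformContinuous_iff.mp huc (εf x / 3) hpos
    exact ⟨min δ0 (εf x / 3), lt_min hδ0 hpos, min_le_right _ _,
      fun a b hab => h0 (lt_of_lt_of_le hab (min_le_left _ _))⟩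
  choose δf hδfpos hδfle hδfuc using hδ
  -- finite subcover of K by balls
  have hcov : K ⊆ ⋃ x ∈ K, Metric.ball x (δf x) := fun x hx =>
    Set.mem_biUnion hx (Metric.mem_ball_self (hδfpos x))
  obtain ⟨s, hsK, hsfin, hscov⟩ :=
    hKc.elim_finite_subcover_image (fun x _ => Metric.isOpen_ball) hcov
  -- the uniform ε
  set T : Finset ℝ := insert (1 : ℝ) (hsfin.toFinset.image (fun x => εf x / 3)) with hTdef
  have hTne : T.Nonempty := ⟨1, Finset.mem_insert_self _ _⟩
  set ε0 : ℝ := T.min' hTne with hε0def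
  have hε0pos : 0 < ε0 := by
    rw [hε0def, Finset.lt_min'_iff]
    intro b hb
    rw [hTdef, Finset.mem_insert] at hb
    rcases hb with rfl | hb
    · exact one_pos
    · obtain ⟨x, _, rfl⟩ := Finset.mem_image.mp hb
      have := hεfpos x; positivity
  refine ⟨ε0 / 2, by positivity, ?_⟩
  intro g hg y hy
  by_contra hyU
  have hyK : y ∈ K := hyU
  -- turn a g-chain into an f-chain
  obtain ⟨n, c, hc0, hcn1, hcd⟩ := hy (ε0 / 2) (by positivity)
  have hcdf : ∀ i ≤ n, dist (f (c i)) (c (i + 1)) < ε0 := by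
    intro i hi
    calc dist (f (c i)) (c (i + 1))
        ≤ dist (f (c i)) (g (c i)) + dist (g (c i)) (c (i + 1)) := dist_triangle _ _ _
      _ < ε0 / 2 + ε0 / 2 := add_lt_add (hg _) (hcd i hi)
      _ = ε0 := by ring
  -- find the covering ball
  obtain ⟨x, hxs, hyx⟩ := Set.mem_iUnion₂.mp (hscov hyK)
  have hxK : x ∈ K := hsK hxs
  have hyxd : dist y x < δf x := Metric.mem_ball.mp hyx
  have hε0le : ε0 ≤ εf x / 3 := by
    apply Finset.min'_le
    rw [hTdef, Finset.mem_insert]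
    exact Or.inr (Finset.mem_image.mpr ⟨x, hsfin.mem_toFinset.mpr hxs, rfl⟩)
  have hfxy : dist (f x) (f y) < εf x / 3 := by
    apply hδfuc x
    rwa [dist_comm]
  have hεx3 : εf x / 3 < εf x := by have := hεfpos x; linarith
  have hyxd3 : dist y x < εf x / 3 := lt_of_lt_of_le hyxd (hδfle x)
  -- build an (εf x)-chain from x to x, contradiction
  apply hεfchain x hxK
  refine ⟨n, fun i => if i = 0 ∨ n + 1 ≤ i then x else c i, by simp, by simp, ?_⟩
  intro i hi
  rcases Nat.eq_zero_or_pos i with rfl | hipos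
  · rcases Nat.eq_zero_or_pos n with rfl | hnpos
    · -- n = 0 : single step from x to x
      simp only [true_or, if_pos, le_refl, or_true]
      have hc1 : c 1 = y := hcn1
      calc dist (f x) x
          ≤ dist (f x) (f y) + dist (f y) (c 1) + dist (c 1) x := dist_triangle4 _ _ _ _
        _ < εf x / 3 + ε0 + εf x / 3 := by
            apply add_lt_add (add_lt_add hfxy (by simpa [hc0] using hcdf 0 le_rfl))
            rw [hc1]; exact hyxd3
        _ ≤ εf x := by linarith
    · -- first step: from x to c 1
      have h1 : ¬ ((1 : ℕ) = 0 ∨ n + 1 ≤ 1) := by omega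
      simp only [true_or, if_pos, h1, if_neg, not_false_iff]
      calc dist (f x) (c 1)
          ≤ dist (f x) (f y) + dist (f y) (c 1) := dist_triangle _ _ _
        _ < εf x / 3 + ε0 := add_lt_add hfxy (by simpa [hc0] using hcdf 0 (by omega))
      linarith
  · have hi0 : ¬ (i = 0 ∨ n + 1 ≤ i) := by omega
    rcases eq_or_lt_of_le hi with rfl | hilt
    · -- last step: from c n to x
      have hn1 : (i + 1 = 0 ∨ i + 1 ≤ i + 1) := by omega
      simp only [hi0, if_neg, not_false_iff, hn1, if_pos]
      calc dist (f (c i)) x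
          ≤ dist (f (c i)) (c (i + 1)) + dist (c (i + 1)) x := dist_triangle _ _ _
        _ < ε0 + εf x / 3 := by
            apply add_lt_add (hcdf i le_rfl)
            rw [hcn1]; exact hyxd3
        _ ≤ εf x := by linarith
    · -- middle steps
      have hi1 : ¬ (i + 1 = 0 ∨ n + 1 ≤ i + 1) := by omega
      simp only [hi0, if_neg, not_false_iff, hi1]
      exact lt_of_lt_of_le (hcdf i hi) (by linarith)
end

section
/- Let X be a compact metric space, f a homeomorphism of X, (g_n) a sequence of homeomorphisms of X converging uniformly to f, and (y_n) a sequence of points with y_n chain recurrent for g_n for each n. If y_n converges to y, then y is chain recurrent for f. -/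
variable {X : Type*} [MetricSpace X]

theorem CR_limit_point [CompactSpace X] (f : X ≃ₜ X) (g : ℕ → X ≃ₜ X)
    (hconv : ∀ ε > (0 : ℝ), ∃ N : ℕ, ∀ n ≥ N, ∀ x, dist ((g n) x) (f x) < ε)
    (y : ℕ → X) (hy : ∀ n, y n ∈ CR ((g n : X → X)))
    (ylim : X) (hlim : Filter.Tendsto y Filter.atTop (nhds ylim)) :
    ylim ∈ CR (f : X → X) := by

  intro ε hε
  have hfc : UniformContinuous (f : X → X) :=
    CompactSpace.uniformContinuous_of_continuous f.continuous
  obtain ⟨δ, hδ, hδf⟩ := Metric.uniformContinuous_iff.mp hfc (ε/4) (by linarith)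
  obtain ⟨N1, hN1⟩ := hconv (ε/4) (by linarith)
  obtain ⟨N2, hN2⟩ := (Metric.tendsto_atTop.mp hlim) (min δ (ε/4)) (lt_min hδ (by linarith))
  set n := max N1 N2 with hn
  have hg : ∀ x, dist ((g n) x) (f x) < ε/4 := hN1 n (le_max_left _ _)
  have hyn : dist (y n) ylim < min δ (ε/4) := hN2 n (le_max_right _ _)
  have hynδ : dist (y n) ylim < δ := lt_of_lt_of_le hyn (min_le_left _ _)
  have hynε : dist (y n) ylim < ε/4 := lt_of_lt_of_le hyn (min_le_right _ _)
  have hfy : dist (f ylim) (f (y n)) < ε/4 := by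
    have := hδf (a := ylim) (b := y n) (by rw [dist_comm]; exact hynδ)
    exact this
  obtain ⟨m, c, hc0, hcm, hch⟩ := hy n (ε/4) (by linarith)
  refine ⟨m, fun i => if i = 0 then ylim else if i = m+1 then ylim else c i, by simp, by simp, ?_⟩
  intro i hi
  have key : ∀ a b : X, dist ((g n) a) b < ε/4 → dist (f a) b < ε/2 := by
    intro a b h
    calc dist (f a) b ≤ dist (f a) ((g n) a) + dist ((g n) a) b := dist_triangle _ _ _
    _ < ε/4 + ε/4 := by
        have := hg a
        rw [dist_comm] at this
        linarith
    _ = ε/2 := by ring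
  rcases eq_or_ne i 0 with h0 | h0
  · subst h0
    rcases eq_or_ne m 0 with hm | hm
    · subst hm
      simp only [reduceIte, zero_add, if_true, if_false, ite_self]
      have h1 : dist ((g n) (y n)) (y n) < ε/4 := by
        have := hch 0 le_rfl
        rwa [hc0, hcm] at this
      have hA : dist (f ylim) (y n) ≤ dist (f ylim) (f (y n)) + dist (f (y n)) ((g n) (y n))
          + dist ((g n) (y n)) (y n) := dist_triangle4 _ _ _ _
      have hB : dist (f ylim) ylim ≤ dist (f ylim) (y n) + dist (y n) ylim :=
        dist_triangle _ _ _
      have hgy : dist (f (y n)) ((g n) (y n)) < ε/4 := by rw [dist_comm]; exact hg _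
      linarith
    · have hm1 : (1:ℕ) ≠ m + 1 := by omega
      simp only [reduceIte, zero_add, if_neg hm1, if_true, if_false]
      have h1 : dist ((g n) (y n)) (c 1) < ε/4 := by
        have := hch 0 (Nat.zero_le _)
        rwa [hc0] at this
      calc dist (f ylim) (c 1)
          ≤ dist (f ylim) (f (y n)) + dist (f (y n)) ((g n) (y n))
            + dist ((g n) (y n)) (c 1) := dist_triangle4 _ _ _ _
        _ < ε/4 + ε/4 + ε/4 := by
            have := hg (y n); rw [dist_comm] at this
            linarith
        _ < ε := by linarith
  · rcases eq_or_ne i m with him | him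
    · subst him
      have hi1 : i ≠ i + 1 := by omega
      have h2 : i + 1 ≠ 0 := by omega
      simp only [if_neg h0, if_neg hi1, if_neg h2, if_true, if_false, ite_self]
      have h1 : dist ((g n) (c i)) (y n) < ε/4 := by
        have := hch i le_rfl
        rwa [hcm] at this
      calc dist (f (c i)) ylim
          ≤ dist (f (c i)) ((g n) (c i)) + dist ((g n) (c i)) (y n)
            + dist (y n) ylim := dist_triangle4 _ _ _ _
        _ < ε/4 + ε/4 + ε/4 := by
            have := hg (c i); rw [dist_comm] at this
            linarith
        _ < ε := by linarith
    · have hi1 : i + 1 ≠ 0 := by omega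
      have hi2 : i + 1 ≠ m + 1 := by omega
      have him1 : i ≠ m + 1 := by omega
      simp only [if_neg h0, if_neg him1, if_neg hi1, if_neg hi2, if_true, if_false]
      have := key (c i) (c (i+1)) (hch i hi)
      linarith
end

section
/- Let X be a compact metric space and f, g homeomorphisms of X. Suppose h : X → X is continuous and satisfies h ∘ g = f ∘ h. If x ∈ X satisfies u(g(x)) = u(x) for every continuous Lyapunov function u for g, then for every continuous Lyapunov function v for f one has v(f(h(x))) = v(h(x)). -/
variable {X : Type*} [MetricSpace X]

theorem semiconj_GR_step [CompactSpace X] (f g : X ≃ₜ X) (h : X → X)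
    (hcont : Continuous h) (hsemi : ∀ x, h (g x) = f (h x))
    (x : X) (hx : ∀ u : X → ℝ, IsLyapunov (g : X → X) u → u (g x) = u x) :
    ∀ v : X → ℝ, IsLyapunov (f : X → X) v → v (f (h x)) = v (h x) := by
  intro v hv
  have hu : IsLyapunov (g : X → X) (v ∘ h) :=
    ⟨hv.1.comp hcont, fun y => by simp [Function.comp, hsemi y, hv.2 (h y)]⟩
  have := hx (v ∘ h) hu
  simpa [Function.comp, hsemi x] using this
end

section
/- Let X be a compact metric space and f a homeomorphism of X whose generalized recurrent set GR(f) is not all of X. Define GR(f) as the set of points x ∈ X such that u(f(x)) = u(x) for every continuous Lyapunov function u for f. If f is topologically stable, then f does not permit GR-explosions: for every open neighborhood U of GR(f) there exists ε > 0 such that every homeomorphism g with d_{C⁰}(f,g) < ε satisfies GR(g) ⊆ U. -/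
variable {X : Type*} [MetricSpace X]

lemma GR_isClosed (f : X → X) (hf : Continuous f) : IsClosed (GR f) := by
  have : GR f = ⋂ u : {u : X → ℝ // IsLyapunov f u}, {x | (u : X → ℝ) (f x) = (u : X → ℝ) x} := by
    ext x
    simp only [GR, Set.mem_setOf_eq, Set.mem_iInter, Subtype.forall]
  rw [this]
  exact isClosed_iInter fun u => isClosed_eq (u.2.1.comp hf) u.2.1

lemma GR_semiconj {f g h : X → X} (hcont : Continuous h)
    (hcomm : ∀ x, h (g x) = f (h x)) {x : X} (hx : x ∈ GR g) : h x ∈ GR f := by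
  intro u hu
  have hlyap : IsLyapunov g (u ∘ h) := by
    refine ⟨hu.1.comp hcont, fun y => ?_⟩
    simp only [Function.comp_apply, hcomm]
    exact hu.2 (h y)
  have := hx (u ∘ h) hlyap
  simpa [Function.comp, hcomm] using this

theorem top_stable_no_GR_explosions [CompactSpace X] (f : X ≃ₜ X)
    (hne : GR (f : X → X) ≠ Set.univ)
    (hstab : ∀ δ > (0 : ℝ), ∃ ε > (0 : ℝ), ∀ g : X ≃ₜ X,
      (∀ x, dist (f x) (g x) < ε) → ∃ h : X → X, Continuous h ∧
        (∀ x, h (g x) = f (h x)) ∧ ∀ x, dist x (h x) < δ) :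
    ∀ U : Set X, IsOpen U → GR (f : X → X) ⊆ U →
      ∃ ε > (0 : ℝ), ∀ g : X ≃ₜ X, (∀ x, dist (f x) (g x) < ε) →
        GR (g : X → X) ⊆ U := by
  intro U hU hGRU
  have hKcomp : IsCompact (GR (f : X → X)) :=
    (GR_isClosed _ f.continuous).isCompact
  obtain ⟨δ, hδ, hthick⟩ := hKcomp.exists_thickening_subset_open hU hGRU
  obtain ⟨ε, hε, hstab'⟩ := hstab δ hδ
  refine ⟨ε, hε, fun g hg x hx => ?_⟩
  obtain ⟨h, hcont, hcomm, hclose⟩ := hstab' g hg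
  have hxf : h x ∈ GR (f : X → X) := GR_semiconj hcont hcomm hx
  apply hthick
  rw [Metric.mem_thickening_iff]
  exact ⟨h x, hxf, hclose x⟩
end

section
/- Let X be a compact metric space and f a homeomorphism of X with GR(f) ≠ X. If the chain recurrent set CR(f) is not all of X, then f does not permit GR-full explosions: there exists ε > 0 such that every homeomorphism g with d_{C⁰}(f,g) < ε satisfies GR(g) ≠ X. -/
variable {X : Type*} [MetricSpace X]

theorem no_GR_full_explosions [CompactSpace X] (f : X ≃ₜ X)
    (hGR : GR (f : X → X) ≠ Set.univ) (hCR : CR (f : X → X) ≠ Set.univ) :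
    ∃ ε > (0 : ℝ), ∀ g : X ≃ₜ X, (∀ x, dist (f x) (g x) < ε) →
      GR (g : X → X) ≠ Set.univ := by
  obtain ⟨x, hx⟩ : ∃ x, x ∉ CR (f : X → X) := by
    by_contra h; push_neg at h; exact hCR (Set.eq_univ_of_forall h)
  simp only [CR, Set.mem_setOf_eq, not_forall] at hx
  obtain ⟨ε₀, hε₀pos, hnochain⟩ := hx
  refine ⟨ε₀ / 3, by positivity, ?_⟩
  intro g hfg hGRg
  set ε : ℝ := ε₀ / 3 with hε
  have hεpos : 0 < ε := by positivity
  set U : Set X := {z | IsEpsChain (g : X → X) ε x z} with hUdef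
  have hgxU : (g : X → X) x ∈ U := by
    refine ⟨0, fun i => if i = 0 then x else (g : X → X) x, by simp, by simp, ?_⟩
    intro i hi
    interval_cases i
    simpa using hεpos
  have hUne : U.Nonempty := ⟨_, hgxU⟩
  have hext : ∀ z ∈ U, ∀ w, dist ((g : X → X) z) w < ε → w ∈ U := by
    rintro z ⟨n, c, hc0, hcn, hstep⟩ w hw
    refine ⟨n + 1, fun i => if i ≤ n + 1 then c i else w, by simp [hc0], by simp, ?_⟩
    intro i hi
    rcases lt_or_eq_of_le hi with h | h
    · have h1 : i ≤ n := Nat.lt_succ_iff.mp h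
      simp only [if_pos (by omega : i ≤ n + 1), if_pos (by omega : i + 1 ≤ n + 1)]
      exact hstep i h1
    · subst h
      simp only [if_pos le_rfl, if_neg (by omega : ¬ n + 1 + 1 ≤ n + 1)]
      rw [hcn]; exact hw
  have hdistU : ∀ z ∈ U, ε ≤ dist x z := by
    intro z hz
    by_contra h; push_neg at h
    obtain ⟨n, c, hc0, hcn, hstep⟩ := hz
    apply hnochain
    refine ⟨n, fun i => if i ≤ n then c i else x, by simp [hc0], by simp, ?_⟩
    intro i hi
    rcases lt_or_eq_of_le hi with h' | h'
    · simp only [if_pos hi, if_pos (Nat.succ_le_of_lt h')]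
      calc dist (f (c i)) (c (i + 1))
          ≤ dist (f (c i)) ((g : X → X) (c i)) + dist ((g : X → X) (c i)) (c (i + 1)) :=
            dist_triangle _ _ _
        _ < ε + ε := add_lt_add (hfg _) (hstep i hi)
        _ ≤ ε₀ := by rw [hε]; linarith
    · subst h'
      simp only [if_pos le_rfl, if_neg (by omega : ¬ i + 1 ≤ i)]
      have h1 : dist (f (c i)) x ≤ dist (f (c i)) ((g : X → X) (c i)) +
          dist ((g : X → X) (c i)) (c (i + 1)) + dist (c (i + 1)) x := dist_triangle4 _ _ _ _
      have h2 : dist (c (i + 1)) x < ε := by rw [hcn, dist_comm]; exact h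
      have := hstep i le_rfl
      have := hfg (c i)
      calc dist (f (c i)) x ≤ _ := h1
        _ < ε + ε + ε := by linarith
        _ ≤ ε₀ := by rw [hε]; linarith
  have hxfar : ε ≤ Metric.infDist x U := by
    by_contra h
    push_neg at h
    obtain ⟨z, hzU, hzd⟩ := (Metric.infDist_lt_iff hUne).mp h
    exact absurd (hdistU z hzU) (not_le.mpr hzd)
  -- uniform continuity of g
  have hgu : UniformContinuous (g : X → X) :=
    CompactSpace.uniformContinuous_of_continuous g.continuous
  obtain ⟨δ₁, hδ₁pos, hδ₁⟩ := Metric.uniformContinuous_iff.mp hgu ε hεpos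
  set δ : ℝ := min δ₁ ε with hδdef
  have hδpos : 0 < δ := lt_min hδ₁pos hεpos
  set u : X → ℝ := fun y => min 1 (Metric.infDist y U / δ) with hu
  have hucont : Continuous u :=
    continuous_const.min ((Metric.continuous_infDist_pt U).div_const δ)
  have hunonneg : ∀ y, 0 ≤ u y := fun y =>
    le_min zero_le_one (div_nonneg Metric.infDist_nonneg hδpos.le)
  have hulyap : ∀ y, u ((g : X → X) y) ≤ u y := by
    intro y
    by_cases hy : Metric.infDist y U < δ
    · obtain ⟨z, hzU, hzd⟩ := (Metric.infDist_lt_iff hUne).mp hy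
      have : dist ((g : X → X) z) ((g : X → X) y) < ε := by
        rw [dist_comm]
        exact hδ₁ (lt_of_lt_of_le hzd (min_le_left _ _))
      have hgyU : (g : X → X) y ∈ U := hext z hzU _ this
      have : u ((g : X → X) y) = 0 := by
        simp [hu, Metric.infDist_zero_of_mem hgyU, hδpos.ne']
      rw [this]; exact hunonneg y
    · push_neg at hy
      have : u y = 1 := min_eq_left ((one_le_div hδpos).mpr hy)
      rw [this]; exact min_le_left _ _
  have hugx : u ((g : X → X) x) = 0 := by
    simp [hu, Metric.infDist_zero_of_mem hgxU, hδpos.ne']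
  have hux : u x = 1 := by
    have : δ ≤ Metric.infDist x U := le_trans (min_le_right _ _) hxfar
    exact min_eq_left ((one_le_div hδpos).mpr this)
  have hxGR : x ∈ GR (g : X → X) := hGRg ▸ Set.mem_univ x
  have := hxGR u ⟨hucont, hulyap⟩
  rw [hugx, hux] at this
  norm_num at this
end

section
/- Let X be a compact metric space and f a homeomorphism of X. Every non-wandering point x of f satisfies u(f(x)) = u(x) for every continuous Lyapunov function u for f; that is, NW(f) ⊆ GR(f). -/
variable {X : Type*} [MetricSpace X]

theorem NW_subset_GR [CompactSpace X] (f : X ≃ₜ X) :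
    NW (f : X → X) ⊆ GR (f : X → X) := by
  intro x hx u hu
  obtain ⟨hcont, hdec⟩ := hu
  have aux : ∀ n (y : X), u (f^[n] y) ≤ u y := by
    intro n
    induction n with
    | zero => intro y; simp
    | succ m ih =>
      intro y
      rw [Function.iterate_succ_apply]
      exact (ih (f y)).trans (hdec y)
  by_contra hne
  have hlt : u (f x) < u x := lt_of_le_of_ne (hdec x) hne
  set c := (u (f x) + u x) / 2 with hc
  have hU : IsOpen ((u ∘ f) ⁻¹' Set.Iio c ∩ u ⁻¹' Set.Ioi c) :=
    ((isOpen_Iio.preimage (hcont.comp f.continuous)).inter (isOpen_Ioi.preimage hcont))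
  have hxU : x ∈ (u ∘ f) ⁻¹' Set.Iio c ∩ u ⁻¹' Set.Ioi c := by
    constructor
    · simp only [Set.mem_preimage, Set.mem_Iio, Function.comp_apply]; linarith
    · simp only [Set.mem_preimage, Set.mem_Ioi]; linarith
  obtain ⟨n, hn, z, ⟨w, hw, rfl⟩, hz2⟩ := hx _ hU hxU
  obtain ⟨m, rfl⟩ := Nat.exists_eq_add_of_le hn
  have h1 : u (f^[1 + m] w) ≤ u (f w) := by
    rw [add_comm, Function.iterate_add_apply]
    exact aux m (f^[1] w) |>.trans (by simp)
  have h2 : c < u (f^[1 + m] w) := hz2.2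
  have h3 : u (f w) < c := hw.1
  linarith
end
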